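/- Let X and Z be finite types, let μ be a pmf on X, and for each x with μ(x) > 0 let q(·|x) and p(·|x) be pmfs on Z with q(·|x) absolutely continuous with respect to p(·|x). With joints Γ_q(x,z) = μ(x)·q(z|x), Γ_p(x,z) = μ(x)·p(z|x), latent marginals q̄, p̄, and reverse conditionals r_q(x|z) = Γ_q(x,z)/q̄(z), r_p(x|z) = Γ_p(x,z)/p̄(z), define the posterior-Gibbs kernels K_q(z,z') = Σ_x r_q(x|z)·q(z'|x) and K_p(z,z') = Σ_x r_p(x|z)·p(z'|x) (Markov kernels on Z, defined on the respective supports). Then the one-step kernel mismatch bound holds: Σ_{z : q̄(z)>0} q̄(z)·KL(K_q(z,·) ‖ K_p(z,·)) ≤ 2·Δ̄ − KL(q̄‖p̄), where Δ̄ = Σ_x μ(x)·KL(q(·|x)‖p(·|x)). -/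

import Mathlib

/-- A probability mass function on a finite type: nonnegative and summing to 1. -/
def IsPMF {Z : Type*} [Fintype Z] (q : Z → ℝ) : Prop :=
  (∀ z, 0 ≤ q z) ∧ ∑ z, q z = 1

/-- KL divergence between pmfs on a finite type (convention 0·log 0 = 0,
automatic in Lean). -/
noncomputable def KL {Z : Type*} [Fintype Z] (q p : Z → ℝ) : ℝ :=
  ∑ z, q z * Real.log (q z / p z)

/-- Latent marginal `q̄(z) = Σ_x μ(x)·q(z|x)`. -/
noncomputable def latMarg {X Z : Type*} [Fintype X] (μ : X → ℝ) (q : X → Z → ℝ) :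
    Z → ℝ :=
  fun z => ∑ x, μ x * q x z

/-- Reverse conditional `r_q(x|z) = μ(x)·q(z|x)/q̄(z)`. -/
noncomputable def revCond {X Z : Type*} [Fintype X] (μ : X → ℝ) (q : X → Z → ℝ)
    (z : Z) : X → ℝ :=
  fun x => μ x * q x z / latMarg μ q z

/-- Posterior-Gibbs kernel `K_q(z,z') = Σ_x r_q(x|z)·q(z'|x)`. -/
noncomputable def gibbsK {X Z : Type*} [Fintype X] (μ : X → ℝ) (q : X → Z → ℝ)
    (z z' : Z) : ℝ :=
  ∑ x, revCond μ q z x * q x z'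

/-- The log-sum inequality. -/
lemma log_sum_ineq {ι : Type*} [Fintype ι] (a b : ι → ℝ)
    (ha : ∀ i, 0 ≤ a i) (hb : ∀ i, 0 ≤ b i) (hab : ∀ i, b i = 0 → a i = 0) :
    (∑ i, a i) * Real.log ((∑ i, a i) / (∑ i, b i)) ≤ ∑ i, a i * Real.log (a i / b i) := by
  rcases (Finset.sum_nonneg (fun i (_ : i ∈ Finset.univ) => hb i)).eq_or_lt with hB | hB
  · have hb0 : ∀ i, b i = 0 := fun i =>
      (Finset.sum_eq_zero_iff_of_nonneg (fun i _ => hb i)).mp hB.symm i (Finset.mem_univ i)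
    have ha0 : ∀ i, a i = 0 := fun i => hab i (hb0 i)
    simp [ha0]
  · set B := ∑ i, b i with hBdef
    have hBne : B ≠ 0 := ne_of_gt hB
    have key := Real.convexOn_mul_log.map_sum_le (t := Finset.univ)
      (w := fun i => b i / B) (p := fun i => a i / b i)
      (fun i _ => div_nonneg (hb i) hB.le)
      (by rw [← Finset.sum_div]; field_simp; exact hBdef.symm)
      (fun i _ => div_nonneg (ha i) (hb i))
    simp only [smul_eq_mul] at key
    have hsum : ∑ i, (b i / B) * (a i / b i) = (∑ i, a i) / B := by
      rw [Finset.sum_div]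
      apply Finset.sum_congr rfl
      intro i _
      rcases eq_or_ne (b i) 0 with h | h
      · simp [h, hab i h]
      · field_simp
    rw [hsum] at key
    have key2 := mul_le_mul_of_nonneg_left key hB.le
    calc (∑ i, a i) * Real.log ((∑ i, a i) / B)
        = B * (((∑ i, a i) / B) * Real.log ((∑ i, a i) / B)) := by
          field_simp
      _ ≤ B * ∑ i, (b i / B) * ((a i / b i) * Real.log (a i / b i)) := key2
      _ = ∑ i, a i * Real.log (a i / b i) := by
          rw [Finset.mul_sum]
          apply Finset.sum_congr rfl
          intro i _
          rcases eq_or_ne (b i) 0 with h | h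
          · simp [h, hab i h]
          · field_simp

/-- **One-step posterior-Gibbs kernel mismatch bound.** -/
theorem one_step_kernel_mismatch
    {X Z : Type*} [Fintype X] [Fintype Z]
    (μ : X → ℝ) (hμ : IsPMF μ) (q p : X → Z → ℝ)
    (hq : ∀ x, 0 < μ x → IsPMF (q x)) (hp : ∀ x, 0 < μ x → IsPMF (p x))
    (habs : ∀ x, 0 < μ x → ∀ z, p x z = 0 → q x z = 0) :
    (∑ z ∈ Finset.univ.filter (fun z => 0 < latMarg μ q z),
        latMarg μ q z * KL (gibbsK μ q z) (gibbsK μ p z))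
      ≤ 2 * (∑ x, μ x * KL (q x) (p x)) - KL (latMarg μ q) (latMarg μ p) := by
  obtain ⟨hμ0, hμ1⟩ := hμ
  have hq0 : ∀ x, 0 < μ x → ∀ z, 0 ≤ q x z := fun x hx => (hq x hx).1
  have hp0 : ∀ x, 0 < μ x → ∀ z, 0 ≤ p x z := fun x hx => (hp x hx).1
  have hΓq0 : ∀ x z, 0 ≤ μ x * q x z := by
    intro x z
    rcases (hμ0 x).eq_or_lt with h | h
    · rw [← h, zero_mul]
    · exact mul_nonneg h.le (hq0 x h z)
  have hΓp0 : ∀ x z, 0 ≤ μ x * p x z := by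
    intro x z
    rcases (hμ0 x).eq_or_lt with h | h
    · rw [← h, zero_mul]
    · exact mul_nonneg h.le (hp0 x h z)
  have hQ0 : ∀ z, 0 ≤ latMarg μ q z := fun z => Finset.sum_nonneg fun x _ => hΓq0 x z
  have hP0 : ∀ z, 0 ≤ latMarg μ p z := fun z => Finset.sum_nonneg fun x _ => hΓp0 x z
  have hQzero : ∀ z, ¬ 0 < latMarg μ q z → ∀ x, μ x * q x z = 0 := by
    intro z hz x
    have h0 : latMarg μ q z = 0 := le_antisymm (not_lt.mp hz) (hQ0 z)
    exact (Finset.sum_eq_zero_iff_of_nonneg (fun x _ => hΓq0 x z)).mp h0 x (Finset.mem_univ x)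
  have habs' : ∀ x, 0 < μ x → ∀ z, 0 < q x z → 0 < p x z := by
    intro x hx z hz
    rcases (hp0 x hx z).eq_or_lt with h | h
    · exact absurd (habs x hx z h.symm) (ne_of_gt hz)
    · exact h
  have hprod : ∀ x z, 0 < μ x * q x z → 0 < μ x ∧ 0 < q x z := by
    intro x z h
    rcases mul_pos_iff.mp h with ⟨h1, h2⟩ | ⟨h1, h2⟩
    · exact ⟨h1, h2⟩
    · exact absurd h1 (not_lt.mpr (hμ0 x))
  have hPpos : ∀ z, 0 < latMarg μ q z → 0 < latMarg μ p z := by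
    intro z hz
    obtain ⟨x, hx⟩ : ∃ x, 0 < μ x * q x z := by
      by_contra h
      push_neg at h
      exact absurd hz (not_lt.mpr (Finset.sum_nonpos fun x _ => h x))
    obtain ⟨hx1, hx2⟩ := hprod x z hx
    have hpz := habs' x hx1 z hx2
    calc (0:ℝ) < μ x * p x z := mul_pos hx1 hpz
      _ ≤ latMarg μ p z := Finset.single_le_sum (fun i _ => hΓp0 i z) (Finset.mem_univ x)
  -- Step 1: data processing per z
  have step1 : ∀ z, 0 < latMarg μ q z →
      KL (gibbsK μ q z) (gibbsK μ p z) ≤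
        ∑ z', ∑ x, (revCond μ q z x * q x z') *
          Real.log ((revCond μ q z x * q x z') / (revCond μ p z x * p x z')) := by
    intro z hz
    have hPz := hPpos z hz
    unfold KL gibbsK
    apply Finset.sum_le_sum
    intro z' _
    apply log_sum_ineq
    · intro x
      rcases (hμ0 x).eq_or_lt with h | h
      · simp [revCond, ← h]
      · exact mul_nonneg (div_nonneg (hΓq0 x z) (hQ0 z)) (hq0 x h z')
    · intro x
      rcases (hμ0 x).eq_or_lt with h | h
      · simp [revCond, ← h]
      · exact mul_nonneg (div_nonneg (hΓp0 x z) (hP0 z)) (hp0 x h z')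
    · intro x hb
      rcases (hμ0 x).eq_or_lt with h | h
      · simp [revCond, ← h]
      · rcases mul_eq_zero.mp hb with h1 | h1
        · have h1' : μ x * p x z / latMarg μ p z = 0 := h1
          have h2 : μ x * p x z = 0 := by
            rcases div_eq_zero_iff.mp h1' with h2 | h2
            · exact h2
            · exact absurd h2 (ne_of_gt hPz)
          have h3 : p x z = 0 := by
            rcases mul_eq_zero.mp h2 with h3 | h3
            · exact absurd h3 (ne_of_gt h)
            · exact h3
          have h4 : q x z = 0 := habs x h z h3
          simp [revCond, h4]
        · have h4 : q x z' = 0 := habs x h z' h1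
          simp [h4]
  -- termwise identity
  have hterm : ∀ z, 0 < latMarg μ q z → ∀ x z',
      latMarg μ q z * ((revCond μ q z x * q x z') *
        Real.log ((revCond μ q z x * q x z') / (revCond μ p z x * p x z'))) =
      (μ x * q x z * q x z') * (Real.log (q x z / p x z) + Real.log (q x z' / p x z')
        - Real.log (latMarg μ q z / latMarg μ p z)) := by
    intro z hz x z'
    have hPz := hPpos z hz
    have hQne : latMarg μ q z ≠ 0 := hz.ne'
    have hfac : latMarg μ q z * (revCond μ q z x * q x z') = μ x * q x z * q x z' := by
      unfold revCond
      field_simp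
    have hfac0 : 0 ≤ μ x * q x z * q x z' := by
      rcases (hμ0 x).eq_or_lt with h | h
      · rw [← h, zero_mul, zero_mul]
      · exact mul_nonneg (mul_nonneg h.le (hq0 x h z)) (hq0 x h z')
    rw [← mul_assoc, hfac]
    rcases hfac0.eq_or_lt with h0 | h0
    · rw [← h0, zero_mul, zero_mul]
    · have h12 : 0 < μ x * q x z ∧ 0 < q x z' := by
        rcases mul_pos_iff.mp h0 with ⟨h1, h2⟩ | ⟨h1, h2⟩
        · exact ⟨h1, h2⟩
        · exact absurd h1 (not_lt.mpr (hΓq0 x z))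
      obtain ⟨h1, hqz'⟩ := h12
      obtain ⟨hμx, hqz⟩ := hprod x z h1
      have hpz := habs' x hμx z hqz
      have hpz' := habs' x hμx z' hqz'
      congr 1
      have harg : (revCond μ q z x * q x z') / (revCond μ p z x * p x z') =
          (q x z / p x z) * ((q x z' / p x z') * (latMarg μ p z / latMarg μ q z)) := by
        unfold revCond
        field_simp
      rw [harg,
        Real.log_mul (div_ne_zero hqz.ne' hpz.ne')
          (mul_ne_zero (div_ne_zero hqz'.ne' hpz'.ne') (div_ne_zero hPz.ne' hz.ne')),
        Real.log_mul (div_ne_zero hqz'.ne' hpz'.ne') (div_ne_zero hPz.ne' hz.ne'),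
        Real.log_div hPz.ne' hz.ne', Real.log_div hz.ne' hPz.ne']
      ring
  have hsumfilter : ∀ x, 0 < μ x →
      ∑ z ∈ Finset.univ.filter (fun z => 0 < latMarg μ q z), μ x * q x z = μ x := by
    intro x hx
    have h1 : ∑ z ∈ Finset.univ.filter (fun z => 0 < latMarg μ q z), μ x * q x z
        = ∑ z, μ x * q x z :=
      Finset.sum_subset (Finset.filter_subset _ _) (fun z _ hzf =>
        hQzero z (fun h => hzf (Finset.mem_filter.mpr ⟨Finset.mem_univ z, h⟩)) x)
    rw [h1, ← Finset.mul_sum, (hq x hx).2, mul_one]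
  -- the three pieces
  have hE1 : ∑ z ∈ Finset.univ.filter (fun z => 0 < latMarg μ q z), ∑ z', ∑ x,
      (μ x * q x z * q x z') * Real.log (q x z / p x z)
      = ∑ x, μ x * KL (q x) (p x) := by
    have inner : ∀ z, ∑ z', ∑ x, (μ x * q x z * q x z') * Real.log (q x z / p x z)
        = ∑ x, (μ x * q x z) * Real.log (q x z / p x z) := by
      intro z
      rw [Finset.sum_comm]
      apply Finset.sum_congr rfl
      intro x _
      rcases (hμ0 x).eq_or_lt with h | h
      · simp [← h]
      · calc ∑ z', (μ x * q x z * q x z') * Real.log (q x z / p x z)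
            = (μ x * q x z * Real.log (q x z / p x z)) * ∑ z', q x z' := by
              rw [Finset.mul_sum]
              exact Finset.sum_congr rfl fun z' _ => by ring
          _ = (μ x * q x z) * Real.log (q x z / p x z) := by rw [(hq x h).2, mul_one]
    calc ∑ z ∈ Finset.univ.filter (fun z => 0 < latMarg μ q z), ∑ z', ∑ x,
          (μ x * q x z * q x z') * Real.log (q x z / p x z)
        = ∑ z ∈ Finset.univ.filter (fun z => 0 < latMarg μ q z), ∑ x,
          (μ x * q x z) * Real.log (q x z / p x z) :=
          Finset.sum_congr rfl fun z _ => inner z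
      _ = ∑ z, ∑ x, (μ x * q x z) * Real.log (q x z / p x z) :=
          Finset.sum_subset (Finset.filter_subset _ _) (fun z _ hzf =>
            Finset.sum_eq_zero fun x _ => by
              rw [hQzero z (fun h => hzf (Finset.mem_filter.mpr ⟨Finset.mem_univ z, h⟩)) x,
                zero_mul])
      _ = ∑ x, ∑ z, (μ x * q x z) * Real.log (q x z / p x z) := Finset.sum_comm
      _ = ∑ x, μ x * KL (q x) (p x) := by
          apply Finset.sum_congr rfl
          intro x _
          rw [KL, Finset.mul_sum]
          exact Finset.sum_congr rfl fun z _ => by ring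
  have hE2 : ∑ z ∈ Finset.univ.filter (fun z => 0 < latMarg μ q z), ∑ z', ∑ x,
      (μ x * q x z * q x z') * Real.log (q x z' / p x z')
      = ∑ x, μ x * KL (q x) (p x) := by
    rw [Finset.sum_comm]
    have inner : ∀ z', ∑ z ∈ Finset.univ.filter (fun z => 0 < latMarg μ q z), ∑ x,
        (μ x * q x z * q x z') * Real.log (q x z' / p x z')
        = ∑ x, μ x * (q x z' * Real.log (q x z' / p x z')) := by
      intro z'
      rw [Finset.sum_comm]
      apply Finset.sum_congr rfl
      intro x _
      rcases (hμ0 x).eq_or_lt with h | h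
      · simp [← h]
      · calc ∑ z ∈ Finset.univ.filter (fun z => 0 < latMarg μ q z),
              (μ x * q x z * q x z') * Real.log (q x z' / p x z')
            = (∑ z ∈ Finset.univ.filter (fun z => 0 < latMarg μ q z), μ x * q x z) *
              (q x z' * Real.log (q x z' / p x z')) := by
              rw [Finset.sum_mul]
              exact Finset.sum_congr rfl fun z _ => by ring
          _ = μ x * (q x z' * Real.log (q x z' / p x z')) := by rw [hsumfilter x h]
    calc ∑ z', ∑ z ∈ Finset.univ.filter (fun z => 0 < latMarg μ q z), ∑ x,
          (μ x * q x z * q x z') * Real.log (q x z' / p x z')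
        = ∑ z', ∑ x, μ x * (q x z' * Real.log (q x z' / p x z')) :=
          Finset.sum_congr rfl fun z' _ => inner z'
      _ = ∑ x, ∑ z', μ x * (q x z' * Real.log (q x z' / p x z')) := Finset.sum_comm
      _ = ∑ x, μ x * KL (q x) (p x) := by
          apply Finset.sum_congr rfl
          intro x _
          rw [KL, Finset.mul_sum]
  have hE3 : ∑ z ∈ Finset.univ.filter (fun z => 0 < latMarg μ q z), ∑ z', ∑ x,
      (μ x * q x z * q x z') * Real.log (latMarg μ q z / latMarg μ p z)
      = KL (latMarg μ q) (latMarg μ p) := by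
    have inner : ∀ z, ∑ z', ∑ x,
        (μ x * q x z * q x z') * Real.log (latMarg μ q z / latMarg μ p z)
        = latMarg μ q z * Real.log (latMarg μ q z / latMarg μ p z) := by
      intro z
      rw [Finset.sum_comm]
      have hx : ∀ x, ∑ z', (μ x * q x z * q x z') * Real.log (latMarg μ q z / latMarg μ p z)
          = (μ x * q x z) * Real.log (latMarg μ q z / latMarg μ p z) := by
        intro x
        rcases (hμ0 x).eq_or_lt with h | h
        · simp [← h]
        · calc ∑ z', (μ x * q x z * q x z') * Real.log (latMarg μ q z / latMarg μ p z)
              = (μ x * q x z * Real.log (latMarg μ q z / latMarg μ p z)) * ∑ z', q x z' := by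
                rw [Finset.mul_sum]
                exact Finset.sum_congr rfl fun z' _ => by ring
            _ = (μ x * q x z) * Real.log (latMarg μ q z / latMarg μ p z) := by
                rw [(hq x h).2, mul_one]
      calc ∑ x, ∑ z', (μ x * q x z * q x z') * Real.log (latMarg μ q z / latMarg μ p z)
          = ∑ x, (μ x * q x z) * Real.log (latMarg μ q z / latMarg μ p z) :=
            Finset.sum_congr rfl fun x _ => hx x
        _ = (∑ x, μ x * q x z) * Real.log (latMarg μ q z / latMarg μ p z) := by
            rw [← Finset.sum_mul]
        _ = latMarg μ q z * Real.log (latMarg μ q z / latMarg μ p z) := rfl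
    calc ∑ z ∈ Finset.univ.filter (fun z => 0 < latMarg μ q z), ∑ z', ∑ x,
          (μ x * q x z * q x z') * Real.log (latMarg μ q z / latMarg μ p z)
        = ∑ z ∈ Finset.univ.filter (fun z => 0 < latMarg μ q z),
            latMarg μ q z * Real.log (latMarg μ q z / latMarg μ p z) :=
          Finset.sum_congr rfl fun z _ => inner z
      _ = ∑ z, latMarg μ q z * Real.log (latMarg μ q z / latMarg μ p z) :=
          Finset.sum_subset (Finset.filter_subset _ _) (fun z _ hzf => by
            have h0 : latMarg μ q z = 0 :=
              le_antisymm (not_lt.mp (fun h => hzf (Finset.mem_filter.mpr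
                ⟨Finset.mem_univ z, h⟩))) (hQ0 z)
            rw [h0, zero_mul])
      _ = KL (latMarg μ q) (latMarg μ p) := rfl
  -- main chain
  calc (∑ z ∈ Finset.univ.filter (fun z => 0 < latMarg μ q z),
        latMarg μ q z * KL (gibbsK μ q z) (gibbsK μ p z))
      ≤ ∑ z ∈ Finset.univ.filter (fun z => 0 < latMarg μ q z),
          latMarg μ q z * ∑ z', ∑ x, (revCond μ q z x * q x z') *
            Real.log ((revCond μ q z x * q x z') / (revCond μ p z x * p x z')) := by
        apply Finset.sum_le_sum
        intro z hzf
        exact mul_le_mul_of_nonneg_left (step1 z (Finset.mem_filter.mp hzf).2) (hQ0 z)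
    _ = ∑ z ∈ Finset.univ.filter (fun z => 0 < latMarg μ q z), ∑ z', ∑ x,
          (μ x * q x z * q x z') * (Real.log (q x z / p x z) + Real.log (q x z' / p x z')
            - Real.log (latMarg μ q z / latMarg μ p z)) := by
        apply Finset.sum_congr rfl
        intro z hzf
        have hz := (Finset.mem_filter.mp hzf).2
        rw [Finset.mul_sum]
        apply Finset.sum_congr rfl
        intro z' _
        rw [Finset.mul_sum]
        exact Finset.sum_congr rfl fun x _ => hterm z hz x z'
    _ = 2 * (∑ x, μ x * KL (q x) (p x)) - KL (latMarg μ q) (latMarg μ p) := by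
        simp only [mul_add, mul_sub, Finset.sum_add_distrib, Finset.sum_sub_distrib]
        rw [hE1, hE2, hE3]
        ring
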